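/- (High-probability bound on the conditional estimation error I₃) Fix contexts x_1,…,x_n ∈ X, λ > 0, δ ∈ (0,1), α ∈ [0,1], and a fixed prior P on H. Let a_1,…,a_n be independent with a_i ∼ π0(·|x_i) and set c_i = c(x_i,a_i). Define R^α(π_Q|x_i) = E_{a∼π0(·|x_i)}[ π_Q(a|x_i)·c(x_i,a)/π0(a|x_i)^α ] and R̂_n^α(π_Q) = (1/n)Σ_{i=1}^n c_i π_Q(a_i|x_i)/π0(a_i|x_i)^α. Then with probability at least 1−δ, simultaneously for all posteriors Q on H: | (1/n)Σ_{i=1}^n R^α(π_Q|x_i) − R̂_n^α(π_Q) | ≤ (D_KL(Q‖P)+log(2/δ))/(nλ) + (λ/(2n))·Σ_{i=1}^n E_{a∼π0(·|x_i)}[π_Q(a|x_i)/π0(a|x_i)^{2α}] + (λ/(2n))·Σ_{i=1}^n π_Q(a_i|x_i)c_i²/π0(a_i|x_i)^{2α}. -/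

import Mathlib

open MeasureTheory ProbabilityTheory Real

open Classical in
/-- Kullback–Leibler divergence between two measures, valued in `ℝ≥0∞` (junk value `⊤` when
`Q` is not absolutely continuous w.r.t. `P` or the log-likelihood ratio is not integrable). -/
noncomputable def klDiv {α : Type*} [MeasurableSpace α] (Q P : Measure α) : ENNReal :=
  if Q ≪ P ∧ Integrable (llr Q P) Q then ENNReal.ofReal (∫ x, llr Q P x ∂Q) else ⊤

/-!
For a deterministic hypothesis `h`, `ipsLoss p0 c ev α x a h = c(x, a) / π₀(a | x)^α · 1[h(x) = a]`
is nonpositive and its `Q`-average is `π_Q(a | x) · c(x, a) / π₀(a | x)^α`, so both the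
conditional risk and its estimate are `Q`-averages of sums of the variables
`Y i a = ipsLoss (xᵢ) a`. For a nonpositive variable `Y` and `λ ≥ 0`,
`E exp(λ(Y - E Y) - λ²/2 · E Y²) ≤ 1` (from `eᵗ ≤ 1 + t + t²/2` for `t ≤ 0`) and
`E exp(λ(E Y - Y) - λ²/2 · Y²) ≤ 1` (from `e^(u - u²/2) ≤ 1 + u` for `u ≥ 0`). Since the actions
are independent these exponential moments multiply over `i`, so by Markov's inequality
`∫ exp (∑ᵢ tᵢ) dP ≤ 2/δ` with probability at least `1 - δ/2`, for each of the two directions.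
The Donsker–Varadhan inequality `∫ g dQ ≤ KL(Q‖P) + log ∫ exp g dP` turns this into a bound valid
for all posteriors `Q` at once. A union bound over the two directions, division by `nλ`, and
`c² ≤ 1` in the second-moment term of the first direction give the result.
-/

namespace Real

lemma exp_le_one_add_add_sq_div_two_of_nonpos {t : ℝ} (ht : t ≤ 0) :
    exp t ≤ 1 + t + t ^ 2 / 2 := by
  have hneg := quadratic_le_exp_of_nonneg (neg_nonneg.mpr ht)
  have hinv : exp t * exp (-t) = 1 := by rw [← exp_add, add_neg_cancel, exp_zero]
  nlinarith [exp_pos t, sq_nonneg (t ^ 2)]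

lemma exp_sub_sq_div_two_le_one_add {u : ℝ} (hu : 0 ≤ u) : exp (u - u ^ 2 / 2) ≤ 1 + u :=
  calc exp (u - u ^ 2 / 2) ≤ exp (log (1 + u)) := by
        gcongr
        refine le_trans ?_ (le_log_one_add_of_nonneg hu)
        rw [le_div_iff₀ (by positivity)]
        nlinarith [pow_nonneg hu 3]
    _ = 1 + u := exp_log (by positivity)

lemma div_rpow_sq {p : ℝ} (hp : 0 ≤ p) (c α : ℝ) : (c / p ^ α) ^ 2 = c ^ 2 / p ^ (2 * α) := by
  rw [div_pow, ← rpow_mul_natCast hp, mul_comm]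
  norm_num

end Real

lemma abs_mul_sub_sub_mul_le {l u v w M : ℝ} (hl : 0 ≤ l) (hu : |u| ≤ M) (hv : |v| ≤ M)
    (hw : |w| ≤ M ^ 2) : |l * (u - v) - l ^ 2 / 2 * w| ≤ l * (M + M) + l ^ 2 / 2 * M ^ 2 :=
  calc |l * (u - v) - l ^ 2 / 2 * w| ≤ |l * (u - v)| + |l ^ 2 / 2 * w| := abs_sub _ _
    _ ≤ l * (M + M) + l ^ 2 / 2 * M ^ 2 := by
        rw [abs_mul, abs_mul, abs_of_nonneg hl,
          abs_of_nonneg (by positivity : (0 : ℝ) ≤ l ^ 2 / 2)]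
        exact add_le_add (mul_le_mul_of_nonneg_left ((abs_sub _ _).trans (add_le_add hu hv)) hl)
          (mul_le_mul_of_nonneg_left hw (by positivity))

lemma abs_sub_le_of_mul_sub_sub_le {l K x y V W : ℝ} (hl : 0 < l) (hV : 0 ≤ V) (hW : 0 ≤ W)
    (hxy : l * (x - y) - l ^ 2 / 2 * V ≤ K) (hyx : l * (y - x) - l ^ 2 / 2 * W ≤ K) :
    |y - x| ≤ K / l + l / 2 * V + l / 2 * W := by
  have hrhs : K / l + l / 2 * V + l / 2 * W = (K + l ^ 2 / 2 * V + l ^ 2 / 2 * W) / l := by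
    field_simp
  rw [hrhs, abs_le, ← neg_div, div_le_iff₀ hl, le_div_iff₀ hl]
  constructor <;> nlinarith [mul_nonneg (sq_nonneg l) hV, mul_nonneg (sq_nonneg l) hW]

lemma abs_inv_mul_sub_inv_mul_le {n l K x y V V' W : ℝ} (hn : 0 ≤ n) (hl : 0 ≤ l)
    (hxy : |x - y| ≤ K / l + l / 2 * V' + l / 2 * W) (hV : V' ≤ V) :
    |n⁻¹ * x - n⁻¹ * y| ≤ K / (n * l) + l / (2 * n) * V + l / (2 * n) * W :=
  calc |n⁻¹ * x - n⁻¹ * y| = n⁻¹ * |x - y| := by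
        rw [← mul_sub, abs_mul, abs_of_nonneg (inv_nonneg.mpr hn)]
    _ ≤ n⁻¹ * (K / l + l / 2 * V + l / 2 * W) := by
        refine mul_le_mul_of_nonneg_left (hxy.trans ?_) (inv_nonneg.mpr hn)
        gcongr
    _ = K / (n * l) + l / (2 * n) * V + l / (2 * n) * W := by ring

section FiniteDistribution

variable {A : Type*} [Fintype A] {p : A → ℝ}

lemma sum_mul_exp_sub_mean_sub_sq_le_one (hp : ∀ a, 0 ≤ p a) (hsum : ∑ a, p a = 1)
    {y : A → ℝ} (hy : ∀ a, y a ≤ 0) {l : ℝ} (hl : 0 ≤ l) :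
    ∑ a, p a * exp (l * (y a - ∑ b, p b * y b) - l ^ 2 / 2 * ∑ b, p b * y b ^ 2) ≤ 1 := by
  set s := l * ∑ b, p b * y b + l ^ 2 / 2 * ∑ b, p b * y b ^ 2 with hs
  have hmgf : ∑ a, p a * exp (l * y a) ≤ exp s :=
    calc ∑ a, p a * exp (l * y a) ≤ ∑ a, p a * (1 + l * y a + (l * y a) ^ 2 / 2) :=
          Finset.sum_le_sum fun a _ => mul_le_mul_of_nonneg_left
            (exp_le_one_add_add_sq_div_two_of_nonpos (mul_nonpos_of_nonneg_of_nonpos hl (hy a)))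
            (hp a)
      _ = 1 + s := by
          have hexpand : ∀ a, p a * (1 + l * y a + (l * y a) ^ 2 / 2)
              = p a + l * (p a * y a) + l ^ 2 / 2 * (p a * y a ^ 2) := fun a => by ring
          rw [Finset.sum_congr rfl fun a _ => hexpand a, Finset.sum_add_distrib,
            Finset.sum_add_distrib, ← Finset.mul_sum, ← Finset.mul_sum, hsum, hs, add_assoc]
      _ ≤ exp s := by linarith [add_one_le_exp s]
  calc ∑ a, p a * exp (l * (y a - ∑ b, p b * y b) - l ^ 2 / 2 * ∑ b, p b * y b ^ 2)
      = (∑ a, p a * exp (l * y a)) * exp (-s) := by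
        rw [Finset.sum_mul]
        exact Finset.sum_congr rfl fun a _ => by rw [mul_assoc, ← exp_add, hs]; congr 2; ring
    _ ≤ exp s * exp (-s) := by gcongr
    _ = 1 := by rw [← exp_add, add_neg_cancel, exp_zero]

lemma sum_mul_exp_mean_sub_sub_sq_le_one (hp : ∀ a, 0 ≤ p a) (hsum : ∑ a, p a = 1)
    {y : A → ℝ} (hy : ∀ a, y a ≤ 0) {l : ℝ} (hl : 0 ≤ l) :
    ∑ a, p a * exp (l * (∑ b, p b * y b - y a) - l ^ 2 / 2 * y a ^ 2) ≤ 1 := by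
  set s := l * ∑ b, p b * y b with hs
  have hmgf : ∑ a, p a * exp (-(l * y a) - (-(l * y a)) ^ 2 / 2) ≤ exp (-s) :=
    calc ∑ a, p a * exp (-(l * y a) - (-(l * y a)) ^ 2 / 2) ≤ ∑ a, p a * (1 + -(l * y a)) :=
          Finset.sum_le_sum fun a _ => mul_le_mul_of_nonneg_left
            (exp_sub_sq_div_two_le_one_add (by nlinarith [hy a])) (hp a)
      _ = 1 + -s := by
          have hexpand : ∀ a, p a * (1 + -(l * y a)) = p a - l * (p a * y a) := fun a => by ring
          rw [Finset.sum_congr rfl fun a _ => hexpand a, Finset.sum_sub_distrib, ← Finset.mul_sum,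
            hsum, hs, sub_eq_add_neg]
      _ ≤ exp (-s) := by linarith [add_one_le_exp (-s)]
  calc ∑ a, p a * exp (l * (∑ b, p b * y b - y a) - l ^ 2 / 2 * y a ^ 2)
      = (∑ a, p a * exp (-(l * y a) - (-(l * y a)) ^ 2 / 2)) * exp s := by
        rw [Finset.sum_mul]
        exact Finset.sum_congr rfl fun a _ => by rw [mul_assoc, ← exp_add, hs]; congr 2; ring
    _ ≤ exp (-s) * exp s := by gcongr
    _ = 1 := by rw [← exp_add, neg_add_cancel, exp_zero]

lemma abs_sum_mul_le (hp : ∀ a, 0 ≤ p a) (hsum : ∑ a, p a = 1) {f : A → ℝ} {M : ℝ}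
    (hf : ∀ a, |f a| ≤ M) : |∑ a, p a * f a| ≤ M :=
  calc |∑ a, p a * f a| ≤ ∑ a, |p a * f a| := Finset.abs_sum_le_sum_abs _ _
    _ ≤ ∑ a, p a * M := Finset.sum_le_sum fun a _ => by
        rw [abs_mul, abs_of_nonneg (hp a)]; exact mul_le_mul_of_nonneg_left (hf a) (hp a)
    _ = M := by rw [← Finset.sum_mul, hsum, one_mul]

lemma isProbabilityMeasure_sum_ofReal_smul_dirac [MeasurableSpace A] (hp : ∀ a, 0 ≤ p a)
    (hsum : ∑ a, p a = 1) :
    IsProbabilityMeasure (∑ a, ENNReal.ofReal (p a) • Measure.dirac a) := by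
  constructor
  simp [← ENNReal.ofReal_sum_of_nonneg fun a _ => hp a, hsum]

lemma integral_sum_ofReal_smul_dirac [MeasurableSpace A] [MeasurableSingletonClass A]
    (hp : ∀ a, 0 ≤ p a) (f : A → ℝ) :
    ∫ a, f a ∂(∑ a, ENNReal.ofReal (p a) • Measure.dirac a) = ∑ a, p a * f a := by
  rw [integral_finsetSum_measure fun a _ =>
    (integrable_dirac enorm_lt_top).smul_measure ENNReal.ofReal_ne_top]
  simp [integral_smul_measure, hp]

end FiniteDistribution

lemma ofReal_one_sub_add_le_of_compl_subset_union {Ω : Type*} [MeasurableSpace Ω]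
    {μ : Measure Ω} [IsProbabilityMeasure μ] {s t u : Set Ω} {a b : ℝ} (ha : 0 ≤ a) (hb : 0 ≤ b)
    (hs : μ s ≤ ENNReal.ofReal a) (ht : μ t ≤ ENNReal.ofReal b) (hu : uᶜ ⊆ s ∪ t) :
    ENNReal.ofReal (1 - (a + b)) ≤ μ u := by
  rw [ENNReal.ofReal_sub _ (add_nonneg ha hb), ENNReal.ofReal_one, tsub_le_iff_right]
  calc 1 = μ Set.univ := measure_univ.symm
    _ ≤ μ u + μ uᶜ := measure_univ_le_add_compl u
    _ ≤ μ u + (ENNReal.ofReal a + ENNReal.ofReal b) := by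
        gcongr
        exact (measure_mono hu).trans ((measure_union_le s t).trans (add_le_add hs ht))
    _ = μ u + ENNReal.ofReal (a + b) := by rw [ENNReal.ofReal_add ha hb]

section PacBayes

variable {H : Type*} [MeasurableSpace H]

lemma Measurable.integrable_of_abs_le {f : H → ℝ} (hf : Measurable f) {C : ℝ}
    (hC : ∀ h, |f h| ≤ C) (μ : Measure H) [IsFiniteMeasure μ] : Integrable f μ :=
  .of_bound hf.aestronglyMeasurable C (ae_of_all _ hC)

lemma Measurable.integrable_exp_of_le {f : H → ℝ} (hf : Measurable f) {C : ℝ}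
    (hC : ∀ h, f h ≤ C) (μ : Measure H) [IsFiniteMeasure μ] :
    Integrable (fun h => exp (f h)) μ :=
  hf.exp.integrable_of_abs_le (C := exp C)
    (fun h => by rw [abs_of_pos (exp_pos _)]; exact exp_le_exp.mpr (hC h)) μ

lemma integral_sum_mul {A : Type*} [Fintype A] (p : A → ℝ) {f : A → H → ℝ} {Q : Measure H}
    (hf : ∀ a, Integrable (f a) Q) : ∫ h, ∑ a, p a * f a h ∂Q = ∑ a, p a * ∫ h, f a h ∂Q := by
  rw [integral_finsetSum _ fun a _ => (hf a).const_mul (p a)]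
  simp_rw [integral_const_mul]

lemma integral_integral_swap_of_finite {Ω : Type*} [Finite Ω] [MeasurableSpace Ω]
    [MeasurableSingletonClass Ω] (μ : Measure Ω) [IsFiniteMeasure μ] (ρ : Measure H)
    {F : Ω → H → ℝ} (hF : ∀ ω, Integrable (F ω) ρ) :
    ∫ ω, ∫ h, F ω h ∂ρ ∂μ = ∫ h, ∫ ω, F ω h ∂μ ∂ρ := by
  have := Fintype.ofFinite Ω
  simp_rw [integral_fintype (μ := μ) Integrable.of_finite, smul_eq_mul]
  rw [integral_finsetSum _ fun ω _ => (hF ω).const_mul (μ.real {ω})]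
  simp_rw [integral_const_mul]

lemma integral_le_toReal_klDiv_add_log_integral_exp {Q P : Measure H} [IsProbabilityMeasure Q]
    [IsProbabilityMeasure P] (hQP : klDiv Q P ≠ ⊤) {g : H → ℝ} (hgQ : Integrable g Q)
    (hgP : Integrable (fun h => exp (g h)) P) :
    ∫ h, g h ∂Q ≤ (klDiv Q P).toReal + log (∫ h, exp (g h) ∂P) := by
  obtain ⟨hac, hllr⟩ : Q ≪ P ∧ Integrable (llr Q P) Q := by
    by_contra h
    exact hQP (if_neg h)
  have := isProbabilityMeasure_tilted hgP
  -- Gibbs' inequality for `Q` against the Gibbs measure `P.tilted g`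
  have hgibbs := InformationTheory.integral_llr_add_sub_measure_univ_nonneg
    (hac.trans (absolutelyContinuous_tilted hgP)) (integrable_llr_tilted_right hac hgQ hllr hgP)
  rw [integral_llr_tilted_right hac hgQ hgP hllr] at hgibbs
  have hkl : ∫ h, llr Q P h ∂Q ≤ (klDiv Q P).toReal := by
    rw [klDiv, if_pos ⟨hac, hllr⟩, ENNReal.toReal_ofReal']
    exact le_max_left _ _
  simp only [probReal_univ] at hgibbs
  linarith

lemma measure_exists_klDiv_add_log_lt_integral_le {Ω : Type*} [Finite Ω] [MeasurableSpace Ω]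
    [MeasurableSingletonClass Ω] (μ : Measure Ω) [IsFiniteMeasure μ] (P : Measure H)
    [IsProbabilityMeasure P] {G : Ω → H → ℝ} (hG : ∀ ω, Measurable (G ω)) {C : ℝ}
    (hGC : ∀ ω h, |G ω h| ≤ C) (hmgf : ∫ ω, ∫ h, exp (G ω h) ∂P ∂μ ≤ 1) {δ : ℝ} (hδ : 0 < δ) :
    μ {ω | ∃ Q : Measure H, IsProbabilityMeasure Q ∧ klDiv Q P ≠ ⊤ ∧
      (klDiv Q P).toReal + log (1 / δ) < ∫ h, G ω h ∂Q} ≤ ENNReal.ofReal δ := by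
  have hexp : ∀ ω, Integrable (fun h => exp (G ω h)) P := fun ω =>
    (hG ω).integrable_exp_of_le (fun h => (le_abs_self _).trans (hGC ω h)) P
  have hbad : {ω | ∃ Q : Measure H, IsProbabilityMeasure Q ∧ klDiv Q P ≠ ⊤ ∧
      (klDiv Q P).toReal + log (1 / δ) < ∫ h, G ω h ∂Q} ⊆
      {ω | 1 / δ ≤ ∫ h, exp (G ω h) ∂P} := by
    rintro ω ⟨Q, hQ, hQP, hlt⟩
    show 1 / δ ≤ _
    by_contra! hZ
    have hDV := integral_le_toReal_klDiv_add_log_integral_exp hQP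
      ((hG ω).integrable_of_abs_le (hGC ω) Q) (hexp ω)
    have := log_le_log (integral_exp_pos (hexp ω)) hZ.le
    linarith
  have hmarkov : 1 / δ * μ.real {ω | 1 / δ ≤ ∫ h, exp (G ω h) ∂P} ≤ 1 :=
    (mul_meas_ge_le_integral_of_nonneg (ae_of_all _ fun ω => (integral_exp_pos (hexp ω)).le)
      Integrable.of_finite _).trans hmgf
  refine (measure_mono hbad).trans ?_
  rw [ENNReal.le_ofReal_iff_toReal_le (measure_ne_top _ _) hδ.le, ← measureReal_def]
  rwa [one_div, inv_mul_le_iff₀ hδ, mul_one, ← one_div] at hmarkov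

lemma integral_pi_integral_exp_sum_le_one {ι A : Type*} [Fintype ι] [Fintype A]
    [MeasurableSpace A] [MeasurableSingletonClass A] {p : ι → A → ℝ} (hp : ∀ i a, 0 ≤ p i a)
    (hsum : ∀ i, ∑ a, p i a = 1) (P : Measure H) [IsProbabilityMeasure P]
    {t : ι → A → H → ℝ} (hint : ∀ ω : ι → A, Integrable (fun h => exp (∑ i, t i (ω i) h)) P)
    (hmgf : ∀ i h, ∑ a, p i a * exp (t i a h) ≤ 1) :
    ∫ ω, ∫ h, exp (∑ i, t i (ω i) h) ∂P
      ∂(Measure.pi fun i => ∑ a, ENNReal.ofReal (p i a) • Measure.dirac a) ≤ 1 := by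
  have := fun i => isProbabilityMeasure_sum_ofReal_smul_dirac (hp i) (hsum i)
  have hfactor : ∀ h, ∫ ω, exp (∑ i, t i (ω i) h)
      ∂(Measure.pi fun i => ∑ a, ENNReal.ofReal (p i a) • Measure.dirac a)
      = ∏ i, ∑ a, p i a * exp (t i a h) := fun h => by
    simp_rw [Real.exp_sum, integral_fintype_prod_eq_prod (fun i a => exp (t i a h)),
      integral_sum_ofReal_smul_dirac (hp _)]
  have hnonneg : ∀ h, 0 ≤ ∏ i, ∑ a, p i a * exp (t i a h) := fun h =>
    Finset.prod_nonneg fun i _ => Finset.sum_nonneg fun a _ => mul_nonneg (hp i a) (exp_pos _).le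
  rw [integral_integral_swap_of_finite _ _ hint]
  simp_rw [hfactor]
  refine (integral_mono_of_nonneg (ae_of_all _ hnonneg) (integrable_const 1)
    (ae_of_all _ fun h => Finset.prod_le_one (fun i _ => ?_) fun i _ => hmgf i h)).trans (by simp)
  exact Finset.sum_nonneg fun a _ => mul_nonneg (hp i a) (exp_pos _).le

lemma measure_pi_exists_klDiv_add_log_lt_sum_integral_le {ι A : Type*} [Fintype ι] [Fintype A]
    [MeasurableSpace A] [MeasurableSingletonClass A] {p : ι → A → ℝ} (hp : ∀ i a, 0 ≤ p i a)
    (hsum : ∀ i, ∑ a, p i a = 1) (P : Measure H) [IsProbabilityMeasure P]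
    {t : ι → A → H → ℝ} (ht : ∀ i a, Measurable (t i a)) {C : ℝ} (htC : ∀ i a h, |t i a h| ≤ C)
    (hmgf : ∀ i h, ∑ a, p i a * exp (t i a h) ≤ 1) {δ : ℝ} (hδ : 0 < δ) :
    Measure.pi (fun i => ∑ a, ENNReal.ofReal (p i a) • Measure.dirac a)
      {ω | ∃ Q : Measure H, IsProbabilityMeasure Q ∧ klDiv Q P ≠ ⊤ ∧
        (klDiv Q P).toReal + log (1 / δ) < ∑ i, ∫ h, t i (ω i) h ∂Q} ≤ ENNReal.ofReal δ := by
  have := fun i => isProbabilityMeasure_sum_ofReal_smul_dirac (hp i) (hsum i)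
  have hmeas : ∀ ω : ι → A, Measurable fun h => ∑ i, t i (ω i) h := fun ω =>
    Finset.measurable_sum _ fun i _ => ht i (ω i)
  have hbound : ∀ (ω : ι → A) h, |∑ i, t i (ω i) h| ≤ Fintype.card ι * C := fun ω h =>
    (Finset.abs_sum_le_sum_abs _ _).trans
      ((Finset.sum_le_sum fun i _ => htC i (ω i) h).trans (by simp))
  refine (measure_mono ?_).trans (measure_exists_klDiv_add_log_lt_integral_le _ P hmeas hbound
    (integral_pi_integral_exp_sum_le_one hp hsum P (fun ω => (hmeas ω).integrable_exp_of_le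
      (fun h => (le_abs_self _).trans (hbound ω h)) P) hmgf) hδ)
  rintro ω ⟨Q, hQ, hQP, hlt⟩
  refine ⟨Q, hQ, hQP, ?_⟩
  rwa [integral_finsetSum _ fun i _ => (ht i (ω i)).integrable_of_abs_le (htC i (ω i)) Q]

variable {ι A : Type*} [Fintype ι] [Fintype A] [MeasurableSpace A] [MeasurableSingletonClass A]

lemma measure_pi_exists_sum_integral_sub_sum_mean_gt_le {p : ι → A → ℝ} (hp : ∀ i a, 0 ≤ p i a)
    (hsum : ∀ i, ∑ a, p i a = 1) (P : Measure H) [IsProbabilityMeasure P]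
    {Y : ι → A → H → ℝ} (hY : ∀ i a, Measurable (Y i a)) (hY0 : ∀ i a h, Y i a h ≤ 0) {M : ℝ}
    (hYM : ∀ i a h, |Y i a h| ≤ M) {l : ℝ} (hl : 0 ≤ l) {δ : ℝ} (hδ : 0 < δ) :
    Measure.pi (fun i => ∑ a, ENNReal.ofReal (p i a) • Measure.dirac a)
      {ω | ∃ Q : Measure H, IsProbabilityMeasure Q ∧ klDiv Q P ≠ ⊤ ∧
        (klDiv Q P).toReal + log (1 / δ) <
          l * (∑ i, ∫ h, Y i (ω i) h ∂Q - ∑ i, ∑ a, p i a * ∫ h, Y i a h ∂Q)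
            - l ^ 2 / 2 * ∑ i, ∑ a, p i a * ∫ h, Y i a h ^ 2 ∂Q} ≤ ENNReal.ofReal δ := by
  have hY2M : ∀ i a h, |Y i a h ^ 2| ≤ M ^ 2 := fun i a h => by
    rw [abs_pow]; exact pow_le_pow_left₀ (abs_nonneg _) (hYM i a h) 2
  refine (measure_mono ?_).trans (measure_pi_exists_klDiv_add_log_lt_sum_integral_le hp hsum P
    (t := fun i a h =>
      l * (Y i a h - ∑ b, p i b * Y i b h) - l ^ 2 / 2 * ∑ b, p i b * Y i b h ^ 2)
    (by fun_prop) (fun i a h => abs_mul_sub_sub_mul_le hl (hYM i a h)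
      (abs_sum_mul_le (hp i) (hsum i) fun b => hYM i b h)
      (abs_sum_mul_le (hp i) (hsum i) fun b => hY2M i b h))
    (fun i h => sum_mul_exp_sub_mean_sub_sq_le_one (hp i) (hsum i) (fun a => hY0 i a h) hl) hδ)
  rintro ω ⟨Q, hQ, hQP, hlt⟩
  refine ⟨Q, hQ, hQP, hlt.trans_eq ?_⟩
  have hint : ∀ i a, Integrable (Y i a) Q := fun i a =>
    (hY i a).integrable_of_abs_le (hYM i a) Q
  have hint2 : ∀ i a, Integrable (fun h => Y i a h ^ 2) Q := fun i a =>
    ((hY i a).pow_const 2).integrable_of_abs_le (hY2M i a) Q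
  have hmean : ∀ i, Integrable (fun h => ∑ b, p i b * Y i b h) Q := fun i =>
    integrable_finsetSum _ fun b _ => (hint i b).const_mul _
  have hvar : ∀ i, Integrable (fun h => ∑ b, p i b * Y i b h ^ 2) Q := fun i =>
    integrable_finsetSum _ fun b _ => (hint2 i b).const_mul _
  have hterm : ∀ i a,
      ∫ h, l * (Y i a h - ∑ b, p i b * Y i b h) - l ^ 2 / 2 * ∑ b, p i b * Y i b h ^ 2 ∂Q
        = l * (∫ h, Y i a h ∂Q - ∑ b, p i b * ∫ h, Y i b h ∂Q)
        - l ^ 2 / 2 * ∑ b, p i b * ∫ h, Y i b h ^ 2 ∂Q := fun i a => by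
    have hdev : Integrable (fun h => l * (Y i a h - ∑ b, p i b * Y i b h)) Q :=
      ((hint i a).sub (hmean i)).const_mul l
    rw [integral_sub hdev ((hvar i).const_mul _), integral_const_mul, integral_const_mul,
      integral_sub (hint i a) (hmean i),
      integral_sum_mul _ (hint i), integral_sum_mul _ (hint2 i)]
  rw [Finset.sum_congr rfl fun i _ => hterm i (ω i), Finset.sum_sub_distrib, ← Finset.mul_sum,
    ← Finset.mul_sum, Finset.sum_sub_distrib]

lemma measure_pi_exists_sum_mean_sub_sum_integral_gt_le {p : ι → A → ℝ} (hp : ∀ i a, 0 ≤ p i a)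
    (hsum : ∀ i, ∑ a, p i a = 1) (P : Measure H) [IsProbabilityMeasure P]
    {Y : ι → A → H → ℝ} (hY : ∀ i a, Measurable (Y i a)) (hY0 : ∀ i a h, Y i a h ≤ 0) {M : ℝ}
    (hYM : ∀ i a h, |Y i a h| ≤ M) {l : ℝ} (hl : 0 ≤ l) {δ : ℝ} (hδ : 0 < δ) :
    Measure.pi (fun i => ∑ a, ENNReal.ofReal (p i a) • Measure.dirac a)
      {ω | ∃ Q : Measure H, IsProbabilityMeasure Q ∧ klDiv Q P ≠ ⊤ ∧
        (klDiv Q P).toReal + log (1 / δ) <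
          l * (∑ i, ∑ a, p i a * ∫ h, Y i a h ∂Q - ∑ i, ∫ h, Y i (ω i) h ∂Q)
            - l ^ 2 / 2 * ∑ i, ∫ h, Y i (ω i) h ^ 2 ∂Q} ≤ ENNReal.ofReal δ := by
  have hY2M : ∀ i a h, |Y i a h ^ 2| ≤ M ^ 2 := fun i a h => by
    rw [abs_pow]; exact pow_le_pow_left₀ (abs_nonneg _) (hYM i a h) 2
  refine (measure_mono ?_).trans (measure_pi_exists_klDiv_add_log_lt_sum_integral_le hp hsum P
    (t := fun i a h => l * (∑ b, p i b * Y i b h - Y i a h) - l ^ 2 / 2 * Y i a h ^ 2)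
    (by fun_prop) (fun i a h => abs_mul_sub_sub_mul_le hl
      (abs_sum_mul_le (hp i) (hsum i) fun b => hYM i b h) (hYM i a h) (hY2M i a h))
    (fun i h => sum_mul_exp_mean_sub_sub_sq_le_one (hp i) (hsum i) (fun a => hY0 i a h) hl) hδ)
  rintro ω ⟨Q, hQ, hQP, hlt⟩
  refine ⟨Q, hQ, hQP, hlt.trans_eq ?_⟩
  have hint : ∀ i a, Integrable (Y i a) Q := fun i a =>
    (hY i a).integrable_of_abs_le (hYM i a) Q
  have hint2 : ∀ i a, Integrable (fun h => Y i a h ^ 2) Q := fun i a =>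
    ((hY i a).pow_const 2).integrable_of_abs_le (hY2M i a) Q
  have hmean : ∀ i, Integrable (fun h => ∑ b, p i b * Y i b h) Q := fun i =>
    integrable_finsetSum _ fun b _ => (hint i b).const_mul _
  have hterm : ∀ i a, ∫ h, l * (∑ b, p i b * Y i b h - Y i a h) - l ^ 2 / 2 * Y i a h ^ 2 ∂Q
      = l * (∑ b, p i b * ∫ h, Y i b h ∂Q - ∫ h, Y i a h ∂Q)
        - l ^ 2 / 2 * ∫ h, Y i a h ^ 2 ∂Q := fun i a => by
    have hdev : Integrable (fun h => l * (∑ b, p i b * Y i b h - Y i a h)) Q :=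
      ((hmean i).sub (hint i a)).const_mul l
    rw [integral_sub hdev ((hint2 i a).const_mul _), integral_const_mul, integral_const_mul,
      integral_sub (hmean i) (hint i a), integral_sum_mul _ (hint i)]
  rw [Finset.sum_congr rfl fun i _ => hterm i (ω i), Finset.sum_sub_distrib, ← Finset.mul_sum,
    ← Finset.mul_sum, Finset.sum_sub_distrib]

theorem ofReal_one_sub_le_measure_pi_abs_sum_mean_sub_sum_integral_le {p : ι → A → ℝ}
    (hp : ∀ i a, 0 ≤ p i a) (hsum : ∀ i, ∑ a, p i a = 1) (P : Measure H) [IsProbabilityMeasure P]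
    {Y : ι → A → H → ℝ} (hY : ∀ i a, Measurable (Y i a)) (hY0 : ∀ i a h, Y i a h ≤ 0) {M : ℝ}
    (hYM : ∀ i a h, |Y i a h| ≤ M) {l : ℝ} (hl : 0 < l) {δ : ℝ} (hδ : 0 < δ) :
    ENNReal.ofReal (1 - δ) ≤ Measure.pi (fun i => ∑ a, ENNReal.ofReal (p i a) • Measure.dirac a)
      {ω | ∀ Q : Measure H, IsProbabilityMeasure Q → klDiv Q P ≠ ⊤ →
        |∑ i, ∑ a, p i a * ∫ h, Y i a h ∂Q - ∑ i, ∫ h, Y i (ω i) h ∂Q|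
          ≤ ((klDiv Q P).toReal + log (2 / δ)) / l
            + l / 2 * ∑ i, ∑ a, p i a * ∫ h, Y i a h ^ 2 ∂Q
            + l / 2 * ∑ i, ∫ h, Y i (ω i) h ^ 2 ∂Q} := by
  have := fun i => isProbabilityMeasure_sum_ofReal_smul_dirac (hp i) (hsum i)
  have hU := measure_pi_exists_sum_integral_sub_sum_mean_gt_le hp hsum P hY hY0 hYM hl.le
    (half_pos hδ)
  have hL := measure_pi_exists_sum_mean_sub_sum_integral_gt_le hp hsum P hY hY0 hYM hl.le
    (half_pos hδ)
  rw [one_div_div] at hU hL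
  calc ENNReal.ofReal (1 - δ) = ENNReal.ofReal (1 - (δ / 2 + δ / 2)) := by rw [add_halves]
    _ ≤ _ := ofReal_one_sub_add_le_of_compl_subset_union (half_pos hδ).le (half_pos hδ).le
        hU hL ?_
  intro ω hω
  by_contra hgood
  simp only [Set.mem_union, Set.mem_ofPred_eq, not_or, not_exists, not_and, not_lt] at hgood
  refine hω fun Q hQ hQP => abs_sub_le_of_mul_sub_sub_le hl ?_ ?_ (hgood.1 Q hQ hQP)
    (hgood.2 Q hQ hQP)
  · exact Finset.sum_nonneg fun i _ => Finset.sum_nonneg fun a _ =>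
      mul_nonneg (hp i a) (integral_nonneg fun h => sq_nonneg _)
  · exact Finset.sum_nonneg fun i _ => integral_nonneg fun h => sq_nonneg _

end PacBayes

section ImportanceWeightedLoss

variable {X A H : Type*} (p0 c : X → A → ℝ) (ev : H → X → A) (α : ℝ)

noncomputable def ipsLoss (x : X) (a : A) : H → ℝ :=
  {h | ev h x = a}.indicator fun _ => c x a / p0 x a ^ α

variable {p0 c ev}

lemma measurable_ipsLoss [MeasurableSpace H] [MeasurableSpace A] [MeasurableSingletonClass A]
    {x : X} (hev : Measurable fun h => ev h x) (a : A) : Measurable (ipsLoss p0 c ev α x a) :=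
  measurable_const.indicator (hev (measurableSet_singleton a))

lemma ipsLoss_nonpos {x : X} {a : A} (hp0 : 0 ≤ p0 x a) (hc : c x a ≤ 0) (h : H) :
    ipsLoss p0 c ev α x a h ≤ 0 :=
  Set.indicator_apply_le' (fun _ => div_nonpos_of_nonpos_of_nonneg hc (rpow_nonneg hp0 α))
    fun _ => le_rfl

lemma abs_ipsLoss_le (x : X) (a : A) (h : H) :
    |ipsLoss p0 c ev α x a h| ≤ |c x a / p0 x a ^ α| := by
  rw [ipsLoss, ← Real.norm_eq_abs, ← Real.norm_eq_abs]
  exact norm_indicator_le_norm_self _ h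

variable [MeasurableSpace H] [MeasurableSpace A] [MeasurableSingletonClass A] {x : X}

lemma integral_ipsLoss (hev : Measurable fun h => ev h x) (a : A) (Q : Measure H) :
    ∫ h, ipsLoss p0 c ev α x a h ∂Q = (Q {h | ev h x = a}).toReal * c x a / p0 x a ^ α := by
  have hs : MeasurableSet {h | ev h x = a} := hev (measurableSet_singleton a)
  rw [ipsLoss, integral_indicator_const _ hs, smul_eq_mul, measureReal_def, mul_div_assoc]

lemma integral_ipsLoss_sq (hev : Measurable fun h => ev h x) {a : A} (hp0 : 0 ≤ p0 x a)
    (Q : Measure H) :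
    ∫ h, ipsLoss p0 c ev α x a h ^ 2 ∂Q
      = (Q {h | ev h x = a}).toReal * c x a ^ 2 / p0 x a ^ (2 * α) := by
  classical
  have hsq : (fun h => ipsLoss p0 c ev α x a h ^ 2)
      = {h | ev h x = a}.indicator fun _ => c x a ^ 2 / p0 x a ^ (2 * α) := by
    funext h
    simp only [ipsLoss, Set.indicator_apply]
    split_ifs
    · exact div_rpow_sq hp0 _ _
    · exact zero_pow two_ne_zero
  have hs : MeasurableSet {h | ev h x = a} := hev (measurableSet_singleton a)
  rw [hsq, integral_indicator_const _ hs, smul_eq_mul, measureReal_def, mul_div_assoc]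

end ImportanceWeightedLoss

theorem conditional_estimation_error_bound_general
    {X : Type*} [MeasurableSpace X] {K : ℕ}
    {H : Type*} [MeasurableSpace H]
    (p0 c : X → Fin K → ℝ)
    (hp0pos : ∀ x a, 0 < p0 x a) (hp0sum : ∀ x, ∑ a, p0 x a = 1)
    (hc : ∀ x a, c x a ∈ Set.Icc (-1 : ℝ) 0)
    (ev : H → X → Fin K)
    (hev : Measurable fun q : H × X => ev q.1 q.2)
    (P : Measure H) [IsProbabilityMeasure P]
    (n : ℕ) (x : Fin n → X)
    (lam : ℝ) (hlam : 0 < lam) (δ : ℝ) (hδ : δ ∈ Set.Ioo (0 : ℝ) 1)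
    (α : ℝ) :
    ENNReal.ofReal (1 - δ) ≤
      (Measure.pi fun i : Fin n => ∑ a, ENNReal.ofReal (p0 (x i) a) • Measure.dirac a)
        {av | ∀ Q : Measure H, IsProbabilityMeasure Q → klDiv Q P ≠ ⊤ →
          |(n : ℝ)⁻¹ * (∑ i, ∑ a, p0 (x i) a *
                ((Q {h | ev h (x i) = a}).toReal * c (x i) a / p0 (x i) a ^ α))
              - (n : ℝ)⁻¹ * ∑ i, c (x i) (av i) * (Q {h | ev h (x i) = av i}).toReal
                  / p0 (x i) (av i) ^ α|
            ≤ ((klDiv Q P).toReal + Real.log (2 / δ)) / (n * lam)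
              + lam / (2 * n) * ∑ i, ∑ a, p0 (x i) a *
                  ((Q {h | ev h (x i) = a}).toReal / p0 (x i) a ^ (2 * α))
              + lam / (2 * n) * ∑ i, (Q {h | ev h (x i) = av i}).toReal
                  * c (x i) (av i) ^ 2 / p0 (x i) (av i) ^ (2 * α)} := by
  have hev_at : ∀ x, Measurable fun h => ev h x := fun x =>
    hev.comp (measurable_id.prodMk measurable_const)
  obtain ⟨M, hM⟩ :=
    (Set.finite_range fun q : Fin n × Fin K => |c (x q.1) q.2 / p0 (x q.1) q.2 ^ α|).bddAbove
  refine (ofReal_one_sub_le_measure_pi_abs_sum_mean_sub_sum_integral_le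
    (fun i a => (hp0pos (x i) a).le) (fun i => hp0sum (x i)) P
    (fun i => measurable_ipsLoss α (hev_at (x i)))
    (fun i a => ipsLoss_nonpos α (hp0pos _ _).le (hc _ _).2)
    (fun i a h => (abs_ipsLoss_le α (x i) a h).trans (hM ⟨(i, a), rfl⟩)) hlam hδ.1).trans
    (measure_mono fun ω hω Q hQ hQP => ?_)
  have hbound := hω Q hQ hQP
  simp only [integral_ipsLoss α (hev_at _), integral_ipsLoss_sq α (hev_at _) (hp0pos _ _).le]
    at hbound
  have hobs : ∀ i, c (x i) (ω i) * (Q {h | ev h (x i) = ω i}).toReal / p0 (x i) (ω i) ^ α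
      = (Q {h | ev h (x i) = ω i}).toReal * c (x i) (ω i) / p0 (x i) (ω i) ^ α := fun i => by
    ring
  simp only [hobs]
  refine abs_inv_mul_sub_inv_mul_le n.cast_nonneg hlam.le hbound ?_
  gcongr with i _ a _
  · exact (hp0pos _ _).le
  · exact rpow_nonneg (hp0pos _ _).le _
  · exact mul_le_of_le_one_right ENNReal.toReal_nonneg
      (by nlinarith [(hc (x i) a).1, (hc (x i) a).2])

/-- **High-probability bound on the conditional estimation error `I₃`.**  For fixed contexts
`x 1, …, x n`, with actions drawn independently with `a i ∼ π0(·|x i)` and costs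
`c i = c(x i, a i)`, with probability at least `1 − δ`, simultaneously for all posteriors `Q`
on `H` (with finite KL divergence to the prior `P`), the conditional estimation error of the
IPS-α estimator is bounded by the KL term plus second-moment terms. -/
theorem conditional_estimation_error_bound
    {X : Type*} [MeasurableSpace X] {K : ℕ}
    {H : Type*} [MeasurableSpace H]
    (p0 c : X → Fin K → ℝ)
    (hp0pos : ∀ x a, 0 < p0 x a) (hp0sum : ∀ x, ∑ a, p0 x a = 1)
    (hc : ∀ x a, c x a ∈ Set.Icc (-1 : ℝ) 0)
    (ev : H → X → Fin K)
    (hev : Measurable fun q : H × X => ev q.1 q.2)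
    (P : Measure H) [IsProbabilityMeasure P]
    (n : ℕ) (hn : 0 < n) (x : Fin n → X)
    (lam : ℝ) (hlam : 0 < lam) (δ : ℝ) (hδ : δ ∈ Set.Ioo (0 : ℝ) 1)
    (α : ℝ) (hα : α ∈ Set.Icc (0 : ℝ) 1) :
    ENNReal.ofReal (1 - δ) ≤
      (Measure.pi fun i : Fin n => ∑ a, ENNReal.ofReal (p0 (x i) a) • Measure.dirac a)
        {av | ∀ Q : Measure H, IsProbabilityMeasure Q → klDiv Q P ≠ ⊤ →
          |(n : ℝ)⁻¹ * (∑ i, ∑ a, p0 (x i) a *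
                ((Q {h | ev h (x i) = a}).toReal * c (x i) a / p0 (x i) a ^ α))
              - (n : ℝ)⁻¹ * ∑ i, c (x i) (av i) * (Q {h | ev h (x i) = av i}).toReal
                  / p0 (x i) (av i) ^ α|
            ≤ ((klDiv Q P).toReal + Real.log (2 / δ)) / (n * lam)
              + lam / (2 * n) * ∑ i, ∑ a, p0 (x i) a *
                  ((Q {h | ev h (x i) = a}).toReal / p0 (x i) a ^ (2 * α))
              + lam / (2 * n) * ∑ i, (Q {h | ev h (x i) = av i}).toReal
                  * c (x i) (av i) ^ 2 / p0 (x i) (av i) ^ (2 * α)} :=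
  conditional_estimation_error_bound_general p0 c hp0pos hp0sum hc ev hev P n x lam hlam δ hδ α
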